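/- For the four-corner Cantor set generations K_n, there is a constant c > 0 such that Fav(K_n) ≥ c/n for all n ≥ 1. -/

import Mathlib

open MeasureTheory

/-- Orthogonal projection of the plane onto the line at angle θ. -/
noncomputable def proj (θ : ℝ) (p : ℝ × ℝ) : ℝ :=
  p.1 * Real.cos θ + p.2 * Real.sin θ

/-- The four translation vectors of the four-corner Cantor set. -/
noncomputable def betas : Finset (ℝ × ℝ) := {(0, 0), (0, 3/4), (3/4, 0), (3/4, 3/4)}

/-- Generations of the four-corner Cantor set. -/
def fourCorner : ℕ → Set (ℝ × ℝ)
  | 0 => Set.Icc (0:ℝ) 1 ×ˢ Set.Icc (0:ℝ) 1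
  | n + 1 => ⋃ b ∈ betas, (fun p : ℝ × ℝ => ((1/4) * p.1 + b.1, (1/4) * p.2 + b.2)) '' fourCorner n


/-- Favard length: the integral over directions of the projection length. -/
noncomputable def Fav (E : Set (ℝ × ℝ)) : ENNReal :=
  ∫⁻ θ in Set.Icc 0 (2 * Real.pi), volume (proj θ '' E)

open Real

/-! ### List sum helpers -/

noncomputable def LSUM {α : Type*} (l : List α) (f : α → ENNReal) : ENNReal := (l.map f).sum

lemma LSUM_nil {α : Type*} (f : α → ENNReal) : LSUM [] f = 0 := rfl

lemma LSUM_cons {α : Type*} (a : α) (l : List α) (f : α → ENNReal) :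
    LSUM (a :: l) f = f a + LSUM l f := by simp [LSUM]

lemma LSUM_mono {α : Type*} (l : List α) {f g : α → ENNReal} (h : ∀ a ∈ l, f a ≤ g a) :
    LSUM l f ≤ LSUM l g := by
  induction l with
  | nil => simp [LSUM_nil]
  | cons a l ih =>
      rw [LSUM_cons, LSUM_cons]
      exact add_le_add (h a (by simp)) (ih fun a ha => h a (by simp [ha]))

lemma LSUM_le_card {α : Type*} (l : List α) {f : α → ENNReal} {c : ENNReal}
    (h : ∀ a ∈ l, f a ≤ c) : LSUM l f ≤ l.length • c :=
  le_trans (List.sum_le_card_nsmul _ c (by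
    intro x hx
    obtain ⟨a, ha, rfl⟩ := List.mem_map.1 hx
    exact h a ha)) (by simp)

lemma LSUM_const {α : Type*} (l : List α) (c : ENNReal) :
    LSUM l (fun _ => c) = l.length • c := by
  induction l with
  | nil => simp [LSUM_nil]
  | cons a l ih => rw [LSUM_cons, ih]; simp [succ_nsmul]; ring

lemma LSUM_add {α : Type*} (l : List α) (f g : α → ENNReal) :
    LSUM l (fun a => f a + g a) = LSUM l f + LSUM l g := by
  induction l with
  | nil => simp [LSUM_nil]
  | cons a l ih => rw [LSUM_cons, LSUM_cons, LSUM_cons, ih]; ring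

lemma LSUM_comm {α β : Type*} (l : List α) (m : List β) (f : α → β → ENNReal) :
    LSUM l (fun a => LSUM m (f a)) = LSUM m (fun b => LSUM l (fun a => f a b)) := by
  induction l with
  | nil => simp [LSUM_nil, LSUM_const]
  | cons a l ih =>
      simp only [LSUM_cons, ih, ← LSUM_add]

lemma LSUM_mul_LSUM {α : Type*} (l m : List α) (f g : α → ENNReal) :
    LSUM l f * LSUM m g = LSUM l (fun a => LSUM m (fun b => f a * g b)) := by
  induction l with
  | nil => simp [LSUM_nil]
  | cons a l ih =>
      rw [LSUM_cons, LSUM_cons, add_mul, ih]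
      congr 1
      clear ih
      induction m with
      | nil => simp [LSUM_nil]
      | cons b m ihm => rw [LSUM_cons, LSUM_cons, mul_add, ihm]

lemma LSUM_flatMap {α β : Type*} (l : List α) (g : α → List β) (f : β → ENNReal) :
    LSUM (l.flatMap g) f = LSUM l (fun a => LSUM (g a) f) := by
  induction l with
  | nil => simp [LSUM_nil, LSUM]
  | cons a l ih =>
      simp only [List.flatMap_cons, LSUM_cons]
      rw [← ih]
      simp [LSUM, List.map_append, List.sum_append]

lemma LSUM_map {α β : Type*} (l : List α) (g : α → β) (f : β → ENNReal) :
    LSUM (l.map g) f = LSUM l (fun a => f (g a)) := by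
  simp [LSUM, List.map_map, Function.comp_def]

lemma LSUM_measurable {α : Type*} (l : List α) (F : α → ℝ → ENNReal)
    (h : ∀ a ∈ l, Measurable (F a)) :
    Measurable (fun θ => LSUM l (fun a => F a θ)) := by
  induction l with
  | nil => simp only [LSUM_nil]; exact measurable_const
  | cons a l ih =>
      simp only [LSUM_cons]
      exact (h a (by simp)).add (ih fun a ha => h a (by simp [ha]))

lemma LSUM_lintegral {α : Type*} (μ : Measure ℝ) (l : List α) (F : α → ℝ → ENNReal)
    (h : ∀ a ∈ l, Measurable (F a)) :
    ∫⁻ θ, LSUM l (fun a => F a θ) ∂μ = LSUM l (fun a => ∫⁻ θ, F a θ ∂μ) := by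
  induction l with
  | nil => simp [LSUM_nil]
  | cons a l ih =>
      simp only [LSUM_cons]
      rw [lintegral_add_left (h a (by simp)), ih (fun a ha => h a (by simp [ha]))]

/-! ### The squares of generation n -/

noncomputable def bl : List (ℝ × ℝ) := [(0,0), (0,3/4), (3/4,0), (3/4,3/4)]

noncomputable def pl : ℕ → List (ℝ × ℝ)
  | 0 => [(0,0)]
  | n + 1 => bl.flatMap (fun b => (pl n).map (fun v => (b.1 + v.1/4, b.2 + v.2/4)))

lemma pl_length (n : ℕ) : (pl n).length = 4 ^ n := by
  induction n with
  | zero => rfl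
  | succ n ih =>
      simp [pl, List.length_flatMap, bl, ih, pow_succ]
      ring

lemma pl_mem_bounds {n : ℕ} {v : ℝ × ℝ} (hv : v ∈ pl n) :
    0 ≤ v.1 ∧ v.1 ≤ 1 ∧ 0 ≤ v.2 ∧ v.2 ≤ 1 := by
  induction n generalizing v with
  | zero =>
      simp [pl] at hv
      subst hv; norm_num
  | succ n ih =>
      simp only [pl, List.mem_flatMap, List.mem_map] at hv
      obtain ⟨b, hb, u, hu, rfl⟩ := hv
      obtain ⟨h1, h2, h3, h4⟩ := ih hu
      have hb' : (0 ≤ b.1 ∧ b.1 ≤ 3/4) ∧ (0 ≤ b.2 ∧ b.2 ≤ 3/4) := by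
        simp [bl] at hb
        rcases hb with h|h|h|h <;> rw [h] <;> norm_num
      constructor
      · simp only; linarith [hb'.1.1]
      refine ⟨by simp only; linarith [hb'.1.2], by simp only; linarith [hb'.2.1],
        by simp only; linarith [hb'.2.2]⟩

lemma bl_subset_betas {b : ℝ × ℝ} (hb : b ∈ bl) : b ∈ betas := by
  simp only [bl, List.mem_cons, List.not_mem_nil, or_false] at hb
  rcases hb with h|h|h|h <;> subst h <;> simp [betas]

/-- The affine map placing a scaled copy of the unit square at `v`. -/
noncomputable def sqmap (δ : ℝ) (v : ℝ × ℝ) (p : ℝ × ℝ) : ℝ × ℝ :=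
  (δ * p.1 + v.1, δ * p.2 + v.2)

lemma sq_subset_fourCorner {n : ℕ} {v : ℝ × ℝ} (hv : v ∈ pl n) :
    sqmap ((1/4)^n) v '' (Set.Icc (0:ℝ) 1 ×ˢ Set.Icc (0:ℝ) 1) ⊆ fourCorner n := by
  induction n generalizing v with
  | zero =>
      simp only [pl] at hv
      simp at hv
      subst hv
      intro x hx
      obtain ⟨p, hp, rfl⟩ := hx
      simpa [sqmap, fourCorner] using hp
  | succ n ih =>
      simp only [pl, List.mem_flatMap, List.mem_map] at hv
      obtain ⟨b, hb, u, hu, rfl⟩ := hv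
      intro x hx
      obtain ⟨p, hp, rfl⟩ := hx
      have hmem : sqmap ((1/4)^n) u p ∈ fourCorner n := ih hu ⟨p, hp, rfl⟩
      have : fourCorner (n+1) ⊇
          (fun p : ℝ × ℝ => ((1/4) * p.1 + b.1, (1/4) * p.2 + b.2)) '' fourCorner n := by
        intro y hy
        exact Set.mem_biUnion (bl_subset_betas hb) hy
      apply this
      refine ⟨sqmap ((1/4)^n) u p, hmem, ?_⟩
      simp only [sqmap, Prod.mk.injEq]
      constructor <;> ring
/-! ### The angular measure estimate -/

lemma arctan_sub_le {a b : ℝ} (hab : a ≤ b) : arctan b - arctan a ≤ b - a := by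
  have hdiff : Differentiable ℝ (fun x : ℝ => x - arctan x) :=
    differentiable_id.sub Real.differentiable_arctan
  have hmono : Monotone (fun x : ℝ => x - arctan x) := by
    apply monotone_of_deriv_nonneg hdiff
    intro x
    rw [deriv_fun_sub (f := fun y => y) differentiableAt_id (Real.differentiable_arctan x)]
    rw [Real.deriv_arctan]
    simp only [deriv_id'']
    have : (1:ℝ)/(1+x^2) ≤ 1 := by
      rw [div_le_one (by positivity)]; nlinarith
    linarith
  have := hmono hab
  simp only at this
  linarith

lemma sqrt_two_le : Real.sqrt 2 ≤ 3/2 := by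
  nlinarith [Real.sq_sqrt (by norm_num : (2:ℝ) ≥ 0), Real.sqrt_nonneg 2]

lemma one_le_sqrt_two : 1 ≤ Real.sqrt 2 := by
  nlinarith [Real.sq_sqrt (by norm_num : (2:ℝ) ≥ 0), Real.sqrt_nonneg 2]

lemma half_measure_bound (d1 d2 r : ℝ) (hr : 0 ≤ r) (hM : 0 < max |d1| |d2|) :
    volume {θ ∈ Set.Icc 0 (π/4) | |d1 * Real.cos θ + d2 * Real.sin θ| ≤ r}
      ≤ ENNReal.ofReal (6 * r / max |d1| |d2|) := by
  set M := max |d1| |d2| with hMdef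
  have hπ := Real.pi_pos
  by_cases hd2 : M/2 ≤ |d2|
  · -- case A : use the tangent substitution
    have hd2pos : 0 < |d2| := by linarith
    have hd2ne : d2 ≠ 0 := by simpa [abs_pos] using hd2pos
    set ρ := Real.sqrt 2 * r / |d2| with hρdef
    set x0 := -d1/d2 with hx0def
    have hsub : {θ ∈ Set.Icc 0 (π/4) | |d1 * Real.cos θ + d2 * Real.sin θ| ≤ r}
        ⊆ Set.Icc (arctan (x0 - ρ)) (arctan (x0 + ρ)) := by
      rintro θ ⟨⟨h0, h4⟩, habs⟩
      have hc : Real.sqrt 2 / 2 ≤ Real.cos θ := by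
        rw [← Real.cos_pi_div_four]
        exact Real.cos_le_cos_of_nonneg_of_le_pi h0 (by linarith) h4
      have hcpos : 0 < Real.cos θ := by
        have := one_le_sqrt_two; linarith
      have htan : |tan θ - x0| ≤ ρ := by
        rw [Real.tan_eq_sin_div_cos, hx0def]
        have heq : Real.sin θ / Real.cos θ - -d1/d2 = (d1 * Real.cos θ + d2 * Real.sin θ) / (d2 * Real.cos θ) := by
          field_simp
          ring
        have hcabs : |Real.cos θ| = Real.cos θ := abs_of_pos hcpos
        rw [heq, hρdef, abs_div, abs_mul, hcabs, div_le_div_iff₀ (by positivity) hd2pos]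
        have hsq : Real.sqrt 2 * Real.sqrt 2 = 2 := Real.mul_self_sqrt (by norm_num)
        have k1 : |d1 * Real.cos θ + d2 * Real.sin θ| * |d2| ≤ r * |d2| :=
          mul_le_mul_of_nonneg_right habs (abs_nonneg d2)
        have k2 : (Real.sqrt 2 * r * |d2|) * (Real.sqrt 2 / 2) = r * |d2| := by
          linear_combination (r * |d2| / 2) * hsq
        have k3 : (Real.sqrt 2 * r * |d2|) * (Real.sqrt 2/2) ≤ (Real.sqrt 2 * r * |d2|) * Real.cos θ :=
          mul_le_mul_of_nonneg_left hc (by positivity)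
        nlinarith [k1, k2, k3]
      have habsle := abs_le.1 htan
      have hθeq : θ = arctan (tan θ) :=
        (Real.arctan_tan (by linarith) (by linarith)).symm
      constructor
      · rw [hθeq]
        exact Real.arctan_strictMono.monotone (by linarith [habsle.1])
      · rw [hθeq]
        exact Real.arctan_strictMono.monotone (by linarith [habsle.2])
    calc volume {θ ∈ Set.Icc 0 (π/4) | |d1 * Real.cos θ + d2 * Real.sin θ| ≤ r}
        ≤ volume (Set.Icc (arctan (x0 - ρ)) (arctan (x0 + ρ))) := measure_mono hsub
      _ = ENNReal.ofReal (arctan (x0 + ρ) - arctan (x0 - ρ)) := Real.volume_Icc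
      _ ≤ ENNReal.ofReal (6 * r / M) := by
          apply ENNReal.ofReal_le_ofReal
          have hρ0 : 0 ≤ ρ := by positivity
          have h1 : arctan (x0 + ρ) - arctan (x0 - ρ) ≤ 2 * ρ := by
            have := arctan_sub_le (by linarith : x0 - ρ ≤ x0 + ρ)
            linarith
          have h2 : 2 * ρ ≤ 6 * r / M := by
            rw [hρdef, show 2 * (Real.sqrt 2 * r / |d2|) = (2 * Real.sqrt 2 * r) / |d2| by ring,
              div_le_div_iff₀ hd2pos hM]
            have hs := sqrt_two_le
            have h3 : M ≤ 2 * |d2| := by linarith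
            have e1 : Real.sqrt 2 * (r * M) ≤ (3/2) * (r * M) :=
              mul_le_mul_of_nonneg_right hs (by positivity)
            have e2 : r * M ≤ r * (2 * |d2|) := mul_le_mul_of_nonneg_left h3 hr
            nlinarith [e1, e2]
          linarith
  · -- case B : |d2| < M/2, hence |d1| = M
    push_neg at hd2
    have hd1 : |d1| = M := by
      rcases max_cases |d1| |d2| with ⟨h1, _⟩ | ⟨h1, h2⟩
      · exact h1.symm
      · rw [← hMdef] at *; linarith
    by_cases hr2 : M/4 ≤ r
    · calc volume {θ ∈ Set.Icc 0 (π/4) | |d1 * Real.cos θ + d2 * Real.sin θ| ≤ r}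
          ≤ volume (Set.Icc (0:ℝ) (π/4)) := measure_mono (Set.sep_subset _ _)
        _ = ENNReal.ofReal (π/4 - 0) := Real.volume_Icc
        _ ≤ ENNReal.ofReal (6 * r / M) := by
            apply ENNReal.ofReal_le_ofReal
            have hπ4 := Real.pi_le_four
            rw [le_div_iff₀ hM]
            nlinarith
    · push_neg at hr2
      convert_to volume (∅ : Set ℝ) ≤ _
      · congr 1
        rw [Set.eq_empty_iff_forall_notMem]
        rintro θ ⟨⟨h0, h4⟩, habs⟩
        have hc : Real.sqrt 2 / 2 ≤ Real.cos θ := by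
          rw [← Real.cos_pi_div_four]
          exact Real.cos_le_cos_of_nonneg_of_le_pi h0 (by linarith) h4
        have hs : Real.sin θ ≤ Real.sqrt 2 / 2 := by
          rw [← Real.sin_pi_div_four]
          apply Real.strictMonoOn_sin.monotoneOn ⟨by linarith, by linarith⟩
            ⟨by linarith, by linarith⟩ h4
        have hsin0 : 0 ≤ Real.sin θ := Real.sin_nonneg_of_nonneg_of_le_pi h0 (by linarith)
        have hcos0 : 0 ≤ Real.cos θ := by
          have := one_le_sqrt_two; linarith
        have hlow : |d1| * Real.cos θ - |d2| * Real.sin θ ≤ |d1 * Real.cos θ + d2 * Real.sin θ| := by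
          have h5 : |d1 * Real.cos θ| ≤ |d1 * Real.cos θ + d2 * Real.sin θ| + |d2 * Real.sin θ| := by
            calc |d1 * Real.cos θ| = |(d1 * Real.cos θ + d2 * Real.sin θ) + (-(d2 * Real.sin θ))| := by ring_nf
              _ ≤ |d1 * Real.cos θ + d2 * Real.sin θ| + |(-(d2 * Real.sin θ))| := abs_add_le _ _
              _ = |d1 * Real.cos θ + d2 * Real.sin θ| + |d2 * Real.sin θ| := by rw [abs_neg]
          rw [abs_mul, abs_mul, abs_of_nonneg hcos0, abs_of_nonneg hsin0] at h5
          linarith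
        have hkey : M/4 ≤ |d1 * Real.cos θ + d2 * Real.sin θ| := by
          have hs2 := one_le_sqrt_two
          have h6 : |d1| * Real.cos θ ≥ M * (Real.sqrt 2/2) := by
            rw [hd1]; nlinarith
          have h7 : |d2| * Real.sin θ ≤ M/2 * (Real.sqrt 2/2) := by
            nlinarith [abs_nonneg d2]
          have h8 : M * (Real.sqrt 2/2) - M/2 * (Real.sqrt 2/2) = M * Real.sqrt 2/4 := by ring
          nlinarith
        linarith
      · simp
/-! ### Full-range angular estimate -/

lemma dir_set_measurable (d1 d2 r a b : ℝ) :
    MeasurableSet {θ : ℝ | θ ∈ Set.Icc a b ∧ |d1 * Real.cos θ + d2 * Real.sin θ| ≤ r} := by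
  have h1 : Measurable fun θ : ℝ => |d1 * Real.cos θ + d2 * Real.sin θ| :=
    (continuous_abs.comp ((continuous_const.mul Real.continuous_cos).add
      (continuous_const.mul Real.continuous_sin))).measurable
  exact measurableSet_Icc.inter (measurableSet_le h1 measurable_const)

lemma full_measure_bound (d1 d2 r : ℝ) (hr : 0 ≤ r) (hM : 0 < max |d1| |d2|) :
    volume {θ ∈ Set.Icc 0 (π/2) | |d1 * Real.cos θ + d2 * Real.sin θ| ≤ r}
      ≤ ENNReal.ofReal (12 * r / max |d1| |d2|) := by
  have hπ := Real.pi_pos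
  set A := {θ ∈ Set.Icc 0 (π/4) | |d2 * Real.cos θ + d1 * Real.sin θ| ≤ r} with hA
  set S1 := {θ ∈ Set.Icc 0 (π/4) | |d1 * Real.cos θ + d2 * Real.sin θ| ≤ r} with hS1
  have hsub : {θ ∈ Set.Icc 0 (π/2) | |d1 * Real.cos θ + d2 * Real.sin θ| ≤ r}
      ⊆ S1 ∪ (fun θ : ℝ => π/2 - θ) ⁻¹' A := by
    rintro θ ⟨⟨h0, h2⟩, habs⟩
    by_cases h4 : θ ≤ π/4
    · exact Or.inl ⟨⟨h0, h4⟩, habs⟩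
    · push_neg at h4
      right
      refine ⟨⟨by linarith, by linarith⟩, ?_⟩
      rw [Real.cos_pi_div_two_sub, Real.sin_pi_div_two_sub]
      have : d2 * Real.sin θ + d1 * Real.cos θ = d1 * Real.cos θ + d2 * Real.sin θ := by ring
      rw [this]
      exact habs
  have hA_meas : MeasurableSet A := dir_set_measurable d2 d1 r 0 (π/4)
  have hpre : volume ((fun θ : ℝ => π/2 - θ) ⁻¹' A) = volume A :=
    (Measure.measurePreserving_sub_left volume (π/2)).measure_preimage
      hA_meas.nullMeasurableSet
  calc volume {θ ∈ Set.Icc 0 (π/2) | |d1 * Real.cos θ + d2 * Real.sin θ| ≤ r}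
      ≤ volume (S1 ∪ (fun θ : ℝ => π/2 - θ) ⁻¹' A) := measure_mono hsub
    _ ≤ volume S1 + volume ((fun θ : ℝ => π/2 - θ) ⁻¹' A) := measure_union_le _ _
    _ ≤ ENNReal.ofReal (6 * r / max |d1| |d2|) + ENNReal.ofReal (6 * r / max |d2| |d1|) := by
        rw [hpre]
        exact add_le_add (half_measure_bound d1 d2 r hr hM)
          (half_measure_bound d2 d1 r hr (by rwa [max_comm]))
    _ = ENNReal.ofReal (12 * r / max |d1| |d2|) := by
        rw [max_comm |d2| |d1|, ← ENNReal.ofReal_add (by positivity) (by positivity)]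
        congr 1
        ring

/-! ### ψ and Φ -/

noncomputable def psi (n : ℕ) (d : ℝ × ℝ) : ENNReal :=
  volume {θ ∈ Set.Icc 0 (π/2) | |d.1 * Real.cos θ + d.2 * Real.sin θ| ≤ 2 * (1/4)^n}

lemma psi_le_two (n : ℕ) (d : ℝ × ℝ) : psi n d ≤ ENNReal.ofReal 2 := by
  have hπ := Real.pi_le_four
  have hπ2 := Real.pi_pos
  calc psi n d ≤ volume (Set.Icc (0:ℝ) (π/2)) := measure_mono (Set.sep_subset _ _)
    _ = ENNReal.ofReal (π/2 - 0) := Real.volume_Icc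
    _ ≤ ENNReal.ofReal 2 := ENNReal.ofReal_le_ofReal (by linarith)

lemma psi_scale (n : ℕ) (d : ℝ × ℝ) : psi (n+1) (d.1/4, d.2/4) = psi n d := by
  unfold psi
  congr 1
  ext θ
  simp only [Set.mem_setOf_eq, and_congr_right_iff]
  intro hθ
  have h1 : d.1/4 * Real.cos θ + d.2/4 * Real.sin θ = (d.1 * Real.cos θ + d.2 * Real.sin θ)/4 := by
    ring
  rw [h1, abs_div, abs_of_pos (by norm_num : (0:ℝ) < 4),
    show (2:ℝ) * (1/4)^(n+1) = (2 * (1/4)^n)/4 by ring]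
  constructor
  · intro h; linarith
  · intro h; linarith

lemma psi_le (n : ℕ) (d : ℝ × ℝ) (hM : 0 < max |d.1| |d.2|) :
    psi n d ≤ ENNReal.ofReal (24 * (1/4)^n / max |d.1| |d.2|) := by
  have := full_measure_bound d.1 d.2 (2 * (1/4)^n) (by positivity) hM
  convert this using 2
  · rfl
  · ring

noncomputable def Phi (n : ℕ) : ENNReal :=
  LSUM (pl n) (fun u => LSUM (pl n) (fun v => psi n (u.1 - v.1, u.2 - v.2)))

lemma Phi_zero : Phi 0 ≤ ENNReal.ofReal 2 := by
  unfold Phi pl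
  simp only [LSUM_cons, LSUM_nil, add_zero]
  exact psi_le_two 0 _

lemma bl_gap {b b' : ℝ × ℝ} (hb : b ∈ bl) (hb' : b' ∈ bl) (hne : b ≠ b') :
    3/4 ≤ |b.1 - b'.1| ∨ 3/4 ≤ |b.2 - b'.2| := by
  simp only [bl, List.mem_cons, List.not_mem_nil, or_false] at hb hb'
  rcases hb with h|h|h|h <;> rcases hb' with h'|h'|h'|h' <;> subst h <;> subst h' <;>
    first
      | (exact absurd rfl hne)
      | (left; norm_num [le_abs]; done)
      | (right; norm_num [le_abs])

lemma offdiag_term {n : ℕ} {b b' u v : ℝ × ℝ} (hb : b ∈ bl) (hb' : b' ∈ bl) (hne : b ≠ b')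
    (hu : u ∈ pl n) (hv : v ∈ pl n) :
    psi (n+1) ((b.1 + u.1/4) - (b'.1 + v.1/4), (b.2 + u.2/4) - (b'.2 + v.2/4))
      ≤ ENNReal.ofReal (12 * (1/4)^n) := by
  obtain ⟨hu1, hu2, hu3, hu4⟩ := pl_mem_bounds hu
  obtain ⟨hv1, hv2, hv3, hv4⟩ := pl_mem_bounds hv
  set d1 := (b.1 + u.1/4) - (b'.1 + v.1/4) with hd1
  set d2 := (b.2 + u.2/4) - (b'.2 + v.2/4) with hd2
  have hM : 1/2 ≤ max |d1| |d2| := by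
    rcases bl_gap hb hb' hne with hgap | hgap
    · refine le_trans ?_ (le_max_left _ _)
      rw [hd1]
      rcases abs_le.1 (le_refl |b.1 - b'.1|) with _
      rcases le_or_gt (b.1 - b'.1) 0 with hsign | hsign
      · rw [abs_of_nonpos hsign] at hgap
        rw [abs_sub_comm]
        calc (1:ℝ)/2 ≤ (b'.1 - b.1) - 1/4 := by linarith
          _ ≤ (b'.1 + v.1/4) - (b.1 + u.1/4) := by linarith
          _ ≤ |(b'.1 + v.1/4) - (b.1 + u.1/4)| := le_abs_self _
      · rw [abs_of_pos hsign] at hgap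
        calc (1:ℝ)/2 ≤ (b.1 - b'.1) - 1/4 := by linarith
          _ ≤ (b.1 + u.1/4) - (b'.1 + v.1/4) := by linarith
          _ ≤ |(b.1 + u.1/4) - (b'.1 + v.1/4)| := le_abs_self _
    · refine le_trans ?_ (le_max_right _ _)
      rw [hd2]
      rcases le_or_gt (b.2 - b'.2) 0 with hsign | hsign
      · rw [abs_of_nonpos hsign] at hgap
        rw [abs_sub_comm]
        calc (1:ℝ)/2 ≤ (b'.2 - b.2) - 1/4 := by linarith
          _ ≤ (b'.2 + v.2/4) - (b.2 + u.2/4) := by linarith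
          _ ≤ |(b'.2 + v.2/4) - (b.2 + u.2/4)| := le_abs_self _
      · rw [abs_of_pos hsign] at hgap
        calc (1:ℝ)/2 ≤ (b.2 - b'.2) - 1/4 := by linarith
          _ ≤ (b.2 + u.2/4) - (b'.2 + v.2/4) := by linarith
          _ ≤ |(b.2 + u.2/4) - (b'.2 + v.2/4)| := le_abs_self _
  have hMpos : 0 < max |d1| |d2| := lt_of_lt_of_le (by norm_num) hM
  calc psi (n+1) (d1, d2) ≤ ENNReal.ofReal (24 * (1/4)^(n+1) / max |d1| |d2|) :=
        psi_le (n+1) (d1, d2) hMpos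
    _ ≤ ENNReal.ofReal (12 * (1/4)^n) := by
        apply ENNReal.ofReal_le_ofReal
        rw [div_le_iff₀ hMpos]
        have h1 : 12 * (1/4:ℝ)^n * (1/2) ≤ 12 * (1/4)^n * max |d1| |d2| := by
          apply mul_le_mul_of_nonneg_left hM (by positivity)
        calc (24:ℝ) * (1/4)^(n+1) = 12 * (1/4)^n * (1/2) := by ring
          _ ≤ 12 * (1/4)^n * max |d1| |d2| := h1
lemma offdiag_sum {n : ℕ} {b b' : ℝ × ℝ} (hb : b ∈ bl) (hb' : b' ∈ bl) (hne : b ≠ b') :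
    LSUM (pl n) (fun u => LSUM (pl n) (fun v =>
      psi (n+1) ((b.1 + u.1/4) - (b'.1 + v.1/4), (b.2 + u.2/4) - (b'.2 + v.2/4))))
      ≤ ENNReal.ofReal (12 * 4^n) := by
  have h1 : ∀ u ∈ pl n, LSUM (pl n) (fun v =>
      psi (n+1) ((b.1 + u.1/4) - (b'.1 + v.1/4), (b.2 + u.2/4) - (b'.2 + v.2/4)))
      ≤ (4^n : ℕ) • ENNReal.ofReal (12 * (1/4)^n) := by
    intro u hu
    rw [← pl_length n]
    exact LSUM_le_card _ (fun v hv => offdiag_term hb hb' hne hu hv)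
  calc LSUM (pl n) (fun u => LSUM (pl n) (fun v =>
        psi (n+1) ((b.1 + u.1/4) - (b'.1 + v.1/4), (b.2 + u.2/4) - (b'.2 + v.2/4))))
      ≤ (pl n).length • ((4^n : ℕ) • ENNReal.ofReal (12 * (1/4)^n)) := LSUM_le_card _ h1
    _ = ((4^n * 4^n : ℕ) : ENNReal) * ENNReal.ofReal (12 * (1/4)^n) := by
        rw [pl_length, smul_smul, nsmul_eq_mul]
    _ = ENNReal.ofReal (((4^n * 4^n : ℕ) : ℝ) * (12 * (1/4)^n)) := by
        rw [← ENNReal.ofReal_natCast (4^n * 4^n), ← ENNReal.ofReal_mul (by positivity)]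
    _ = ENNReal.ofReal (12 * 4^n) := by
        congr 1
        push_cast
        have h4 : ((1:ℝ)/4)^n = 1/4^n := by
          rw [div_pow, one_pow]
        rw [h4]
        field_simp
lemma Phi_succ (n : ℕ) : Phi (n+1) ≤ 4 * Phi n + ENNReal.ofReal (144 * 4^n) := by
  have hdiag : ∀ b : ℝ × ℝ, LSUM (pl n) (fun u => LSUM (pl n) (fun v =>
      psi (n+1) ((b.1 + u.1/4) - (b.1 + v.1/4), (b.2 + u.2/4) - (b.2 + v.2/4)))) = Phi n := by
    intro b
    unfold Phi
    congr 1
    funext u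
    congr 1
    funext v
    have h1 : ((b.1 + u.1/4) - (b.1 + v.1/4), (b.2 + u.2/4) - (b.2 + v.2/4))
        = ((u.1 - v.1)/4, (u.2 - v.2)/4) := by
      simp only [Prod.mk.injEq]; constructor <;> ring
    rw [h1]
    exact psi_scale n (u.1 - v.1, u.2 - v.2)
  have hexp : Phi (n+1) = LSUM bl (fun b => LSUM bl (fun b' => LSUM (pl n) (fun u =>
      LSUM (pl n) (fun v =>
        psi (n+1) ((b.1 + u.1/4) - (b'.1 + v.1/4), (b.2 + u.2/4) - (b'.2 + v.2/4)))))) := by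
    unfold Phi
    rw [show pl (n+1)
        = bl.flatMap (fun b => (pl n).map (fun v => (b.1 + v.1/4, b.2 + v.2/4))) from rfl]
    simp only [LSUM_flatMap, LSUM_map]
    congr 1
    funext b
    exact LSUM_comm _ _ _
  rw [hexp]
  simp only [bl, LSUM_cons, LSUM_nil, add_zero]
  rw [hdiag ((0:ℝ),(0:ℝ)), hdiag ((0:ℝ),(3/4:ℝ)), hdiag ((3/4:ℝ),(0:ℝ)), hdiag ((3/4:ℝ),(3/4:ℝ))]
  have m0 : ((0:ℝ),(0:ℝ)) ∈ bl := by simp [bl]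
  have m1 : ((0:ℝ),(3/4:ℝ)) ∈ bl := by simp [bl]
  have m2 : ((3/4:ℝ),(0:ℝ)) ∈ bl := by simp [bl]
  have m3 : ((3/4:ℝ),(3/4:ℝ)) ∈ bl := by simp [bl]
  set X := ENNReal.ofReal (12 * (4:ℝ)^n) with hX
  have h01 := offdiag_sum (n := n) m0 m1 (by norm_num [Prod.ext_iff])
  have h02 := offdiag_sum (n := n) m0 m2 (by norm_num [Prod.ext_iff])
  have h03 := offdiag_sum (n := n) m0 m3 (by norm_num [Prod.ext_iff])
  have h10 := offdiag_sum (n := n) m1 m0 (by norm_num [Prod.ext_iff])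
  have h12 := offdiag_sum (n := n) m1 m2 (by norm_num [Prod.ext_iff])
  have h13 := offdiag_sum (n := n) m1 m3 (by norm_num [Prod.ext_iff])
  have h20 := offdiag_sum (n := n) m2 m0 (by norm_num [Prod.ext_iff])
  have h21 := offdiag_sum (n := n) m2 m1 (by norm_num [Prod.ext_iff])
  have h23 := offdiag_sum (n := n) m2 m3 (by norm_num [Prod.ext_iff])
  have h30 := offdiag_sum (n := n) m3 m0 (by norm_num [Prod.ext_iff])
  have h31 := offdiag_sum (n := n) m3 m1 (by norm_num [Prod.ext_iff])
  have h32 := offdiag_sum (n := n) m3 m2 (by norm_num [Prod.ext_iff])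
  have h12X : (12 : ENNReal) * X = ENNReal.ofReal (144 * 4^n) := by
    rw [hX, ← ENNReal.ofReal_ofNat 12, ← ENNReal.ofReal_mul (by norm_num)]
    congr 1
    ring
  have hmid : (Phi n + (X + (X + X))) + ((X + (Phi n + (X + X)))
      + ((X + (X + (Phi n + X))) + (X + (X + (X + Phi n)))))
      = 4 * Phi n + ENNReal.ofReal (144 * 4^n) := by
    rw [← h12X]; ring
  refine le_trans ?_ (le_of_eq hmid)
  gcongr <;> assumption

lemma Phi_bound (n : ℕ) : Phi n ≤ ENNReal.ofReal ((2 + 36 * n) * 4^n) := by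
  induction n with
  | zero =>
      simpa using Phi_zero
  | succ n ih =>
      calc Phi (n+1) ≤ 4 * Phi n + ENNReal.ofReal (144 * 4^n) := Phi_succ n
        _ ≤ 4 * ENNReal.ofReal ((2 + 36 * n) * 4^n) + ENNReal.ofReal (144 * 4^n) := by gcongr
        _ = ENNReal.ofReal (4 * ((2 + 36 * (n:ℝ)) * 4^n) + 144 * 4^n) := by
            rw [← ENNReal.ofReal_ofNat 4, ← ENNReal.ofReal_mul (by positivity),
              ← ENNReal.ofReal_add (by positivity) (by positivity)]
        _ ≤ ENNReal.ofReal ((2 + 36 * ((n+1 : ℕ) : ℝ)) * 4^(n+1)) := by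
            apply ENNReal.ofReal_le_ofReal
            push_cast
            ring_nf
            exact le_refl _
lemma LSUM_mul_left {α : Type*} (l : List α) (c : ENNReal) (f : α → ENNReal) :
    LSUM l (fun a => c * f a) = c * LSUM l f := by
  induction l with
  | nil => simp [LSUM_nil]
  | cons a l ih => rw [LSUM_cons, LSUM_cons, ih, mul_add]

noncomputable def aL (n : ℕ) (θ : ℝ) : ℝ := (1/4)^n * (Real.cos θ + Real.sin θ)

noncomputable def Jset (n : ℕ) (θ : ℝ) (v : ℝ × ℝ) : Set ℝ :=
  Set.Icc (proj θ v) (proj θ v + aL n θ)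

noncomputable def Ffun (n : ℕ) (θ : ℝ) : ENNReal :=
  LSUM (pl n) (fun u => LSUM (pl n) (fun v => volume (Jset n θ u ∩ Jset n θ v)))

lemma J_inter_formula (n : ℕ) (θ : ℝ) (u v : ℝ × ℝ) :
    volume (Jset n θ u ∩ Jset n θ v)
      = ENNReal.ofReal (min (proj θ u) (proj θ v) + aL n θ - max (proj θ u) (proj θ v)) := by
  unfold Jset
  rw [Set.Icc_inter_Icc, Real.volume_Icc]
  congr 1
  rw [← min_add_add_right]

lemma proj_continuous (v : ℝ × ℝ) : Continuous (fun θ => proj θ v) := by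
  unfold proj
  exact (continuous_const.mul Real.continuous_cos).add (continuous_const.mul Real.continuous_sin)

lemma J_inter_measurable (n : ℕ) (u v : ℝ × ℝ) :
    Measurable (fun θ => volume (Jset n θ u ∩ Jset n θ v)) := by
  have heq : (fun θ => volume (Jset n θ u ∩ Jset n θ v))
      = fun θ => ENNReal.ofReal (min (proj θ u) (proj θ v) + aL n θ
        - max (proj θ u) (proj θ v)) := funext (fun θ => J_inter_formula n θ u v)
  rw [heq]
  have haL : Continuous (aL n) :=
    continuous_const.mul (Real.continuous_cos.add Real.continuous_sin)
  apply (ENNReal.continuous_ofReal.comp ?_).measurable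
  exact (((proj_continuous u).min (proj_continuous v)).add haL).sub
    ((proj_continuous u).max (proj_continuous v))

lemma Ffun_measurable (n : ℕ) : Measurable (Ffun n) := by
  apply LSUM_measurable
  intro u _
  apply LSUM_measurable
  intro v _
  exact J_inter_measurable n u v

lemma proj_sub (θ : ℝ) (u v : ℝ × ℝ) :
    proj θ u - proj θ v = (u.1 - v.1) * Real.cos θ + (u.2 - v.2) * Real.sin θ := by
  unfold proj; ring

lemma F_integral (n : ℕ) :
    ∫⁻ θ in Set.Icc 0 (π/2), Ffun n θ ≤ ENNReal.ofReal (4 + 72 * n) := by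
  set L : ℝ := 2 * (1/4)^n with hL
  have hLpos : 0 < L := by positivity
  have hperpair : ∀ u v : ℝ × ℝ,
      ∫⁻ θ in Set.Icc 0 (π/2), volume (Jset n θ u ∩ Jset n θ v)
        ≤ ENNReal.ofReal L * psi n (u.1 - v.1, u.2 - v.2) := by
    intro u v
    set S := {θ ∈ Set.Icc 0 (π/2) |
      |(u.1 - v.1) * Real.cos θ + (u.2 - v.2) * Real.sin θ| ≤ 2 * (1/4)^n} with hS
    have hSmeas : MeasurableSet S := dir_set_measurable _ _ _ _ _
    have hmono : ∀ θ ∈ Set.Icc 0 (π/2), volume (Jset n θ u ∩ Jset n θ v)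
        ≤ S.indicator (fun _ => ENNReal.ofReal L) θ := by
      intro θ hθ
      by_cases hθS : θ ∈ S
      · rw [Set.indicator_of_mem hθS]
        calc volume (Jset n θ u ∩ Jset n θ v) ≤ volume (Jset n θ u) :=
              measure_mono Set.inter_subset_left
          _ = ENNReal.ofReal (proj θ u + aL n θ - proj θ u) := Real.volume_Icc
          _ ≤ ENNReal.ofReal L := by
              apply ENNReal.ofReal_le_ofReal
              have h1 : Real.cos θ ≤ 1 := Real.cos_le_one θ
              have h2 : Real.sin θ ≤ 1 := Real.sin_le_one θ
              have h3 : (0:ℝ) < (1/4)^n := by positivity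
              rw [hL]
              unfold aL
              nlinarith
      · rw [Set.indicator_of_notMem hθS]
        rw [hS, Set.mem_setOf_eq] at hθS
        push_neg at hθS
        have habs := hθS hθ
        have hd : max (proj θ u) (proj θ v) - min (proj θ u) (proj θ v)
            = |proj θ u - proj θ v| := by rw [abs_sub_comm]; exact max_sub_min_eq_abs _ _
        have habs' : 2 * (1/4:ℝ)^n < |proj θ u - proj θ v| := by
          rw [proj_sub]; exact habs
        have hcos1 : Real.cos θ ≤ 1 := Real.cos_le_one θ
        have hsin1 : Real.sin θ ≤ 1 := Real.sin_le_one θ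
        have h3 : (0:ℝ) < (1/4)^n := by positivity
        have haLle : aL n θ ≤ 2 * (1/4)^n := by unfold aL; nlinarith
        have hzero : min (proj θ u) (proj θ v) + aL n θ - max (proj θ u) (proj θ v) ≤ 0 := by
          linarith
        rw [J_inter_formula]
        exact (ENNReal.ofReal_eq_zero.2 hzero).le
    calc ∫⁻ θ in Set.Icc 0 (π/2), volume (Jset n θ u ∩ Jset n θ v)
        ≤ ∫⁻ θ in Set.Icc 0 (π/2), S.indicator (fun _ => ENNReal.ofReal L) θ :=
          setLIntegral_mono (measurable_const.indicator hSmeas) hmono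
      _ = ENNReal.ofReal L * psi n (u.1 - v.1, u.2 - v.2) := by
          rw [lintegral_indicator hSmeas, setLIntegral_const,
            Measure.restrict_apply hSmeas,
            Set.inter_eq_left.2 (Set.sep_subset _ _)]
          rfl
  calc ∫⁻ θ in Set.Icc 0 (π/2), Ffun n θ
      = LSUM (pl n) (fun u => LSUM (pl n) (fun v =>
          ∫⁻ θ in Set.Icc 0 (π/2), volume (Jset n θ u ∩ Jset n θ v))) := by
        unfold Ffun
        rw [LSUM_lintegral _ _ _ (fun u _ => LSUM_measurable _ _
          (fun v _ => J_inter_measurable n u v))]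
        congr 1
        funext u
        rw [LSUM_lintegral _ _ _ (fun v _ => J_inter_measurable n u v)]
    _ ≤ LSUM (pl n) (fun u => LSUM (pl n) (fun v =>
          ENNReal.ofReal L * psi n (u.1 - v.1, u.2 - v.2))) := by
        apply LSUM_mono
        intro u _
        apply LSUM_mono
        intro v _
        exact hperpair u v
    _ = ENNReal.ofReal L * Phi n := by
        unfold Phi
        rw [← LSUM_mul_left]
        congr 1
        funext u
        rw [← LSUM_mul_left]
    _ ≤ ENNReal.ofReal L * ENNReal.ofReal ((2 + 36 * n) * 4^n) := by
        gcongr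
        exact Phi_bound n
    _ = ENNReal.ofReal (4 + 72 * n) := by
        rw [← ENNReal.ofReal_mul (le_of_lt hLpos)]
        congr 1
        have h4 : ((1:ℝ)/4)^n * 4^n = 1 := by
          rw [← mul_pow]; norm_num
        rw [hL]
        nlinarith [h4]
lemma LSUM_congr {α : Type*} (l : List α) {f g : α → ENNReal} (h : ∀ a ∈ l, f a = g a) :
    LSUM l f = LSUM l g :=
  le_antisymm (LSUM_mono l fun a ha => (h a ha).le) (LSUM_mono l fun a ha => (h a ha).ge)

lemma fourCorner_isCompact (n : ℕ) : IsCompact (fourCorner n) := by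
  induction n with
  | zero => exact isCompact_Icc.prod isCompact_Icc
  | succ n ih =>
      show IsCompact (⋃ b ∈ betas, _)
      apply Set.Finite.isCompact_biUnion (betas.finite_toSet)
      intro b _
      apply ih.image
      exact ((continuous_const.mul continuous_fst).add continuous_const).prodMk
        ((continuous_const.mul continuous_snd).add continuous_const)

lemma cos_add_sin_ge_one {θ : ℝ} (hθ : θ ∈ Set.Icc 0 (π/2)) :
    1 ≤ Real.cos θ + Real.sin θ := by
  obtain ⟨h0, h2⟩ := hθ
  have hπ := Real.pi_pos
  have hc : 0 ≤ Real.cos θ := Real.cos_nonneg_of_mem_Icc ⟨by linarith, h2⟩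
  have hs : 0 ≤ Real.sin θ := Real.sin_nonneg_of_nonneg_of_le_pi h0 (by linarith)
  have h1 : Real.sin θ ^ 2 + Real.cos θ ^ 2 = 1 := Real.sin_sq_add_cos_sq θ
  nlinarith

lemma J_subset_image {n : ℕ} {θ : ℝ} (hθ : θ ∈ Set.Icc 0 (π/2)) {v : ℝ × ℝ}
    (hv : v ∈ pl n) : Jset n θ v ⊆ proj θ '' fourCorner n := by
  intro x hx
  obtain ⟨hx1, hx2⟩ := hx
  set δ : ℝ := (1/4)^n with hδ
  have hδpos : (0:ℝ) < δ := by positivity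
  have hcs : 1 ≤ Real.cos θ + Real.sin θ := cos_add_sin_ge_one hθ
  have hcspos : 0 < Real.cos θ + Real.sin θ := by linarith
  set lam : ℝ := (x - proj θ v) / (δ * (Real.cos θ + Real.sin θ)) with hlam
  have hlam0 : 0 ≤ lam := by
    apply div_nonneg (by linarith) (by positivity)
  have hlam1 : lam ≤ 1 := by
    rw [hlam, div_le_one (by positivity)]
    have haL : aL n θ = δ * (Real.cos θ + Real.sin θ) := rfl
    linarith [hx2, haL]
  refine ⟨sqmap δ v (lam, lam), ?_, ?_⟩
  · exact sq_subset_fourCorner hv ⟨(lam, lam), ⟨⟨hlam0, hlam1⟩, ⟨hlam0, hlam1⟩⟩, rfl⟩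
  · show proj θ (δ * lam + v.1, δ * lam + v.2) = x
    unfold proj
    simp only
    have hexp : (δ * lam + v.1) * Real.cos θ + (δ * lam + v.2) * Real.sin θ
        = proj θ v + (δ * (Real.cos θ + Real.sin θ)) * lam := by
      unfold proj; ring
    rw [hexp, hlam]
    field_simp
    ring

lemma key_theta (n : ℕ) {θ : ℝ} (hθ : θ ∈ Set.Icc 0 (π/2)) :
    1 ≤ volume (proj θ '' fourCorner n) * Ffun n θ := by
  set U := proj θ '' fourCorner n with hU
  have hUmeas : MeasurableSet U := by
    apply IsCompact.measurableSet
    apply (fourCorner_isCompact n).image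
    exact (continuous_fst.mul continuous_const).add (continuous_snd.mul continuous_const)
  set μ' := volume.restrict U with hμ'
  set g : ℝ → ENNReal :=
    fun x => LSUM (pl n) (fun v => (Jset n θ v).indicator (fun _ => (1:ENNReal)) x) with hg
  have hgmeas : Measurable g := by
    apply LSUM_measurable
    intro v _
    exact measurable_const.indicator measurableSet_Icc
  have hcs : 1 ≤ Real.cos θ + Real.sin θ := cos_add_sin_ge_one hθ
  have haL : (0:ℝ) ≤ aL n θ := by
    unfold aL
    positivity
  -- the total mass of g
  have ha : ∫⁻ x, g x ∂μ' = ENNReal.ofReal (Real.cos θ + Real.sin θ) := by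
    have hstep : ∫⁻ x, g x ∂μ' = LSUM (pl n) (fun v =>
        ∫⁻ x, (Jset n θ v).indicator (fun _ => (1:ENNReal)) x ∂μ') :=
      LSUM_lintegral μ' (pl n) (fun v x => (Jset n θ v).indicator (fun _ => (1:ENNReal)) x)
        (fun v _ => measurable_const.indicator measurableSet_Icc)
    rw [hstep]
    have heach : ∀ v ∈ pl n,
        (∫⁻ x, (Jset n θ v).indicator (fun _ => (1:ENNReal)) x ∂μ')
        = ENNReal.ofReal (aL n θ) := by
      intro v hv
      have hJmeas : MeasurableSet (Jset n θ v) := measurableSet_Icc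
      rw [lintegral_indicator hJmeas, setLIntegral_one,
        hμ', Measure.restrict_apply hJmeas,
        Set.inter_eq_left.2 (J_subset_image hθ hv)]
      show volume (Set.Icc (proj θ v) (proj θ v + aL n θ)) = _
      rw [Real.volume_Icc]
      congr 1
      ring
    calc LSUM (pl n) (fun v => ∫⁻ x, (Jset n θ v).indicator (fun _ => (1:ENNReal)) x ∂μ')
        = LSUM (pl n) (fun _ => ENNReal.ofReal (aL n θ)) := LSUM_congr _ heach
      _ = (4^n : ℕ) • ENNReal.ofReal (aL n θ) := by rw [LSUM_const, pl_length]
      _ = ENNReal.ofReal (Real.cos θ + Real.sin θ) := by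
          rw [nsmul_eq_mul, ← ENNReal.ofReal_natCast (4^n), ← ENNReal.ofReal_mul (by positivity)]
          congr 1
          unfold aL
          push_cast
          have h4 : (4:ℝ)^n * (1/4)^n = 1 := by rw [← mul_pow]; norm_num
          nlinarith [h4]
  -- second moment is bounded by Ffun
  have hJJ : ∀ u v : ℝ × ℝ, MeasurableSet (Jset n θ u ∩ Jset n θ v) := fun u v =>
    (measurableSet_Icc : MeasurableSet (Jset n θ u)).inter measurableSet_Icc
  have hB : ∫⁻ x, g x * g x ∂μ' ≤ Ffun n θ := by
    have hgg : ∀ x, g x * g x = LSUM (pl n) (fun u => LSUM (pl n) (fun v =>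
        (Jset n θ u ∩ Jset n θ v).indicator (fun _ => (1:ENNReal)) x)) := by
      intro x
      rw [hg]
      simp only
      rw [LSUM_mul_LSUM]
      apply LSUM_congr
      intro u _
      apply LSUM_congr
      intro v _
      by_cases hxu : x ∈ Jset n θ u <;> by_cases hxv : x ∈ Jset n θ v <;>
        simp [Set.indicator_of_mem, Set.indicator_of_notMem, hxu, hxv, Set.mem_inter_iff]
    calc ∫⁻ x, g x * g x ∂μ'
        ≤ ∫⁻ x, g x * g x ∂volume := setLIntegral_le_lintegral _ _
      _ = LSUM (pl n) (fun u => LSUM (pl n) (fun v => volume (Jset n θ u ∩ Jset n θ v))) := by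
          have hre : ∫⁻ x, g x * g x ∂volume = ∫⁻ x, LSUM (pl n) (fun u => LSUM (pl n) (fun v =>
              (Jset n θ u ∩ Jset n θ v).indicator (fun _ => (1:ENNReal)) x)) ∂volume := by
            congr 1
            funext x
            exact hgg x
          rw [hre]
          rw [LSUM_lintegral volume (pl n) _ (fun u _ => LSUM_measurable _ _ (fun v _ =>
            measurable_const.indicator (hJJ u v)))]
          apply LSUM_congr
          intro u _
          rw [LSUM_lintegral volume (pl n) _ (fun v _ =>
            measurable_const.indicator (hJJ u v))]
          apply LSUM_congr
          intro v _
          rw [lintegral_indicator (hJJ u v), setLIntegral_one]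
      _ = Ffun n θ := rfl
  -- Cauchy-Schwarz
  have hgsq : ∀ x : ENNReal, x ^ (2:ℝ) = x * x := by
    intro x
    rw [show (2:ℝ) = ((2:ℕ):ℝ) by norm_num, ENNReal.rpow_natCast, sq]
  have hconj : Real.HolderConjugate 2 2 := ⟨by norm_num, by norm_num, by norm_num⟩
  have hH := ENNReal.lintegral_mul_le_Lp_mul_Lq μ' hconj hgmeas.aemeasurable
    (aemeasurable_const : AEMeasurable (fun _ : ℝ => (1:ENNReal)) μ')
  set B := ∫⁻ x, g x * g x ∂μ' with hBdef
  have hBeq : ∫⁻ x, g x ^ (2:ℝ) ∂μ' = B := by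
    rw [hBdef]
    congr 1
    funext x
    exact hgsq (g x)
  have h1 : ENNReal.ofReal (Real.cos θ + Real.sin θ) ≤ B ^ (1/2:ℝ) * (volume U) ^ (1/2:ℝ) := by
    simp only [Pi.mul_apply, mul_one, ENNReal.one_rpow, lintegral_one] at hH
    rw [ha, hBeq] at hH
    rwa [hμ', Measure.restrict_apply_univ] at hH
  have hmain : ENNReal.ofReal (Real.cos θ + Real.sin θ) * ENNReal.ofReal (Real.cos θ + Real.sin θ)
      ≤ B * volume U := by
    refine le_trans (mul_le_mul' h1 h1) (le_of_eq ?_)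
    have hhalf : B ^ (1/2:ℝ) * B ^ (1/2:ℝ) = B := by
      rw [← ENNReal.rpow_add_of_nonneg (1/2) (1/2) (by norm_num) (by norm_num)]
      norm_num
    have hhalf2 : (volume U) ^ (1/2:ℝ) * (volume U) ^ (1/2:ℝ) = volume U := by
      rw [← ENNReal.rpow_add_of_nonneg (1/2) (1/2) (by norm_num) (by norm_num)]
      norm_num
    calc B ^ (1/2:ℝ) * (volume U) ^ (1/2:ℝ) * (B ^ (1/2:ℝ) * (volume U) ^ (1/2:ℝ))
        = (B ^ (1/2:ℝ) * B ^ (1/2:ℝ)) * ((volume U) ^ (1/2:ℝ) * (volume U) ^ (1/2:ℝ)) := by ring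
      _ = B * volume U := by rw [hhalf, hhalf2]
  have hone : (1:ENNReal) ≤ ENNReal.ofReal (Real.cos θ + Real.sin θ) := by
    rw [← ENNReal.ofReal_one]
    exact ENNReal.ofReal_le_ofReal hcs
  calc (1:ENNReal) = 1 * 1 := (one_mul 1).symm
    _ ≤ ENNReal.ofReal (Real.cos θ + Real.sin θ) * ENNReal.ofReal (Real.cos θ + Real.sin θ) :=
        mul_le_mul' hone hone
    _ ≤ B * volume U := hmain
    _ ≤ Ffun n θ * volume U := by gcongr
    _ = volume U * Ffun n θ := mul_comm _ _


/-- The Favard lengths of the generations of the four-corner Cantor set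
satisfy Fav(Kₙ) ≳ 1/n. -/
theorem fav_fourCorner_lower_bound :
    ∃ c : ℝ, 0 < c ∧ ∀ n : ℕ, 1 ≤ n →
      ENNReal.ofReal (c / n) ≤ Fav (fourCorner n) := by
  refine ⟨1/320, by norm_num, ?_⟩
  intro n hn
  have hπ := Real.pi_pos
  have hπ3 := Real.pi_gt_three
  have hn1 : (1:ℝ) ≤ (n:ℝ) := by exact_mod_cast hn
  set t : ENNReal := ENNReal.ofReal (320 * n) with ht
  have htne0 : t ≠ 0 := by
    rw [ht]
    exact (ENNReal.ofReal_pos.2 (by nlinarith)).ne'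
  have htneTop : t ≠ ⊤ := ENNReal.ofReal_ne_top
  have hbadmeas : MeasurableSet {θ : ℝ | t ≤ Ffun n θ} :=
    measurableSet_le measurable_const (Ffun_measurable n)
  -- Chebyshev
  have hcheb : (volume.restrict (Set.Icc 0 (π/2))) {θ | t ≤ Ffun n θ}
      ≤ ENNReal.ofReal (1/4) := by
    refine le_trans (meas_ge_le_lintegral_div ((Ffun_measurable n).aemeasurable) htne0 htneTop) ?_
    refine le_trans (ENNReal.div_le_div_right (F_integral n) t) ?_
    rw [ht]
    apply ENNReal.div_le_of_le_mul
    rw [← ENNReal.ofReal_mul (by norm_num)]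
    apply ENNReal.ofReal_le_ofReal
    nlinarith
  set Good := Set.Icc 0 (π/2) \ {θ : ℝ | t ≤ Ffun n θ} with hGood
  have hGmeas : MeasurableSet Good := measurableSet_Icc.diff hbadmeas
  have hGvol : (1:ENNReal) ≤ volume Good := by
    have hIccvol : ENNReal.ofReal (3/2) ≤ volume (Set.Icc (0:ℝ) (π/2)) := by
      rw [Real.volume_Icc]
      apply ENNReal.ofReal_le_ofReal
      linarith
    have hbadvol : volume (Set.Icc 0 (π/2) ∩ {θ : ℝ | t ≤ Ffun n θ})
        ≤ ENNReal.ofReal (1/4) := by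
      have h := hcheb
      rw [Measure.restrict_apply hbadmeas] at h
      rwa [Set.inter_comm] at h
    have hsplit : volume (Set.Icc (0:ℝ) (π/2))
        ≤ volume Good + volume (Set.Icc 0 (π/2) ∩ {θ : ℝ | t ≤ Ffun n θ}) := by
      refine le_trans (measure_mono ?_) (measure_union_le _ _)
      intro θ hθ
      by_cases h : t ≤ Ffun n θ
      · exact Or.inr ⟨hθ, h⟩
      · exact Or.inl ⟨hθ, h⟩
    have h5 : ENNReal.ofReal (3/2) ≤ volume Good + ENNReal.ofReal (1/4) := by
      refine le_trans hIccvol (le_trans hsplit ?_)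
      gcongr
    have h6 : (1:ENNReal) + ENNReal.ofReal (1/4) ≤ volume Good + ENNReal.ofReal (1/4) := by
      refine le_trans ?_ h5
      rw [← ENNReal.ofReal_one, ← ENNReal.ofReal_add (by norm_num) (by norm_num)]
      apply ENNReal.ofReal_le_ofReal
      norm_num
    exact (ENNReal.add_le_add_iff_right ENNReal.ofReal_ne_top).1 h6
  -- pointwise lower bound on the good set
  have hpt : ∀ θ ∈ Good, t⁻¹ ≤ volume (proj θ '' fourCorner n) := by
    intro θ hθG
    obtain ⟨hθI, hθB⟩ := hθG
    have hFlt : Ffun n θ ≤ t := (not_le.1 hθB).le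
    have hk := key_theta n hθI
    have h2 : (1:ENNReal) ≤ volume (proj θ '' fourCorner n) * t :=
      le_trans hk (by gcongr)
    calc t⁻¹ = t⁻¹ * 1 := (mul_one _).symm
      _ ≤ t⁻¹ * (volume (proj θ '' fourCorner n) * t) := by gcongr
      _ = volume (proj θ '' fourCorner n) * (t⁻¹ * t) := by ring
      _ = volume (proj θ '' fourCorner n) := by
          rw [ENNReal.inv_mul_cancel htne0 htneTop, mul_one]
  -- assemble
  have hFav : t⁻¹ * volume Good ≤ Fav (fourCorner n) := by
    unfold Fav
    have hGsub : Good ⊆ Set.Icc 0 (2*π) := by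
      rintro θ ⟨⟨h0, h2⟩, -⟩
      exact ⟨h0, by linarith⟩
    have hres : ∫⁻ θ in Good, volume (proj θ '' fourCorner n)
        ≤ ∫⁻ θ in Set.Icc 0 (2*π), volume (proj θ '' fourCorner n) :=
      lintegral_mono' (Measure.restrict_mono hGsub le_rfl) (le_refl _)
    refine le_trans ?_ hres
    have hstep1 : t⁻¹ * volume Good = ∫⁻ θ, Good.indicator (fun _ => t⁻¹) θ := by
      rw [lintegral_indicator hGmeas, setLIntegral_const]
    have hstep2 : ∫⁻ θ, Good.indicator (fun _ => t⁻¹) θ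
        ≤ ∫⁻ θ, Good.indicator (fun θ => volume (proj θ '' fourCorner n)) θ := by
      apply lintegral_mono
      intro θ
      by_cases hθ : θ ∈ Good
      · rw [Set.indicator_of_mem hθ, Set.indicator_of_mem hθ]
        exact hpt θ hθ
      · rw [Set.indicator_of_notMem hθ, Set.indicator_of_notMem hθ]
    have hstep3 : ∫⁻ θ, Good.indicator (fun θ => volume (proj θ '' fourCorner n)) θ
        = ∫⁻ θ in Good, volume (proj θ '' fourCorner n) :=
      lintegral_indicator hGmeas _
    rw [hstep1, ← hstep3]
    exact hstep2
  have hfinal : ENNReal.ofReal ((1/320) / n) ≤ t⁻¹ * volume Good := by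
    have h7 : ENNReal.ofReal ((1/320) / n) = t⁻¹ := by
      rw [ht, ← ENNReal.ofReal_inv_of_pos (by nlinarith)]
      congr 1
      field_simp
    rw [h7]
    calc t⁻¹ = t⁻¹ * 1 := (mul_one _).symm
      _ ≤ t⁻¹ * volume Good := by gcongr
  exact le_trans hfinal hFav
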